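/- Let f : I → ℝ be a C² convex strictly increasing function on a real interval I with f''(x) ≥ δ > 0 for all x ∈ I. Then its inverse function g : f(I) → I is 1/2-Hölder continuous with constant √(2/δ), i.e., |g(x₂) - g(x₁)| ≤ √(2/δ)·|x₂ - x₁|^(1/2) for all x₁, x₂ ∈ f(I). -/

import Mathlib

/-!
Writing `f` as its tangent line at `x₁` plus a remainder, the bound `f'' ≥ δ` makes the
remainder at least `δ/2 · (x₂ - x₁)²`, and monotonicity of `f` makes the slope `f' x₁`
nonnegative. Hence `|f x₂ - f x₁| ≥ δ/2 · (x₂ - x₁)²`, which is the Hölder bound for the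
inverse after taking square roots.
-/

open Set

theorem Set.OrdConnected.mul_sub_le_image_sub_of_le_hasDerivAt {I : Set ℝ} (hI : I.OrdConnected)
    {φ φ' : ℝ → ℝ} {C : ℝ} (hφ : ∀ x ∈ I, HasDerivAt φ (φ' x) x) (hC : ∀ x ∈ I, C ≤ φ' x)
    {x y : ℝ} (hx : x ∈ I) (hy : y ∈ I) (hxy : x ≤ y) : C * (y - x) ≤ φ y - φ x :=
  hI.convex.mul_sub_le_image_sub_of_le_deriv
    (fun t ht ↦ (hφ t ht).continuousAt.continuousWithinAt)
    (fun t ht ↦ (hφ t (interior_subset ht)).differentiableAt.differentiableWithinAt)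
    (fun t ht ↦ (hφ t (interior_subset ht)).deriv ▸ hC t (interior_subset ht)) x hx y hy hxy

theorem Set.OrdConnected.mul_sub_add_sq_le_image_sub {I : Set ℝ} (hI : I.OrdConnected)
    {f f' f'' : ℝ → ℝ} {δ : ℝ} (hder : ∀ x ∈ I, HasDerivAt f (f' x) x)
    (hder2 : ∀ x ∈ I, HasDerivAt f' (f'' x) x) (hbound : ∀ x ∈ I, δ ≤ f'' x)
    {x y : ℝ} (hx : x ∈ I) (hy : y ∈ I) (hxy : x ≤ y) :
    f' x * (y - x) + δ / 2 * (y - x) ^ 2 ≤ f y - f x := by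
  have hJ : (I ∩ Ici x).OrdConnected := hI.inter ordConnected_Ici
  have hremainder' : ∀ t ∈ I ∩ Ici x, 0 ≤ f' t - (f' x + δ * (t - x)) := fun t ht ↦ by
    have := hI.mul_sub_le_image_sub_of_le_hasDerivAt hder2 hbound hx ht.1 ht.2
    linarith
  have hremainder : ∀ t ∈ I ∩ Ici x, HasDerivAt (fun t ↦ f t - (f' x * t + δ / 2 * (t - x) ^ 2))
      (f' t - (f' x + δ * (t - x))) t := fun t ht ↦ by
    refine ((hder t ht.1).sub (((hasDerivAt_id' t).const_mul (f' x)).add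
        ((((hasDerivAt_id' t).sub_const x).pow 2).const_mul (δ / 2)))).congr_deriv ?_
    push_cast
    ring
  have := hJ.mul_sub_le_image_sub_of_le_hasDerivAt hremainder hremainder'
    ⟨hx, le_refl x⟩ ⟨hy, hxy⟩ hxy
  linarith

theorem HasDerivAt.nonneg_of_monotoneOn_Icc {f : ℝ → ℝ} {f' x y : ℝ}
    (hd : HasDerivAt f f' x) (hf : MonotoneOn f (Icc x y)) (hxy : x < y) : 0 ≤ f' := by
  refine hd.hasDerivWithinAt.nonneg_of_monotoneOn ?_ hf
  rw [accPt_principal_iff_nhdsWithin, Icc_sdiff_left]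
  exact left_nhdsWithin_Ioc_neBot hxy

theorem Set.OrdConnected.half_mul_sq_le_abs_image_sub {I : Set ℝ} (hI : I.OrdConnected)
    {f f' f'' : ℝ → ℝ} {δ : ℝ} (hder : ∀ x ∈ I, HasDerivAt f (f' x) x)
    (hder2 : ∀ x ∈ I, HasDerivAt f' (f'' x) x) (hbound : ∀ x ∈ I, δ ≤ f'' x)
    (hmono : MonotoneOn f I) {x y : ℝ} (hx : x ∈ I) (hy : y ∈ I) :
    δ / 2 * (y - x) ^ 2 ≤ |f y - f x| := by
  wlog hxy : x < y generalizing x y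
  · rcases (not_lt.mp hxy).eq_or_lt with rfl | hyx
    · simp
    · rw [abs_sub_comm, ← neg_sub x y, neg_sq]
      exact this hy hx hyx
  have hf'x : 0 ≤ f' x :=
    (hder x hx).nonneg_of_monotoneOn_Icc (hmono.mono (hI.out hx hy)) hxy
  have := hI.mul_sub_add_sq_le_image_sub hder hder2 hbound hx hy hxy.le
  rw [abs_of_nonneg (sub_nonneg.mpr (hmono hx hy hxy.le))]
  nlinarith

theorem abs_le_sqrt_mul_rpow_of_mul_sq_le {δ a b : ℝ} (hδ : 0 < δ) (h : δ / 2 * a ^ 2 ≤ b) :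
    |a| ≤ Real.sqrt (2 / δ) * b ^ ((1 : ℝ) / 2) := by
  rw [← Real.sqrt_eq_rpow, ← Real.sqrt_mul (by positivity), ← Real.sqrt_sq_eq_abs]
  refine Real.sqrt_le_sqrt ?_
  rw [div_mul_eq_mul_div, le_div_iff₀ hδ]
  linarith

theorem stmt_0_general (I : Set ℝ) (hI : I.OrdConnected)
    (f f' f'' g : ℝ → ℝ) (δ : ℝ) (hδ : 0 < δ)
    (hder : ∀ x ∈ I, HasDerivAt f (f' x) x)
    (hder2 : ∀ x ∈ I, HasDerivAt f' (f'' x) x)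
    (hmono : StrictMonoOn f I)
    (hbound : ∀ x ∈ I, δ ≤ f'' x)
    (hinv : ∀ x ∈ I, g (f x) = x) :
    ∀ x₁ ∈ I, ∀ x₂ ∈ I,
      |g (f x₂) - g (f x₁)| ≤ Real.sqrt (2 / δ) * |f x₂ - f x₁| ^ ((1 : ℝ) / 2) := by
  intro x₁ hx₁ x₂ hx₂
  rw [hinv x₁ hx₁, hinv x₂ hx₂]
  exact abs_le_sqrt_mul_rpow_of_mul_sq_le hδ
    (hI.half_mul_sq_le_abs_image_sub hder hder2 hbound hmono.monotoneOn hx₁ hx₂)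

/-- Hölder continuity of the inverse of a C² convex strictly increasing function
with second derivative bounded below by δ > 0. -/
theorem stmt_0 (I : Set ℝ) (hI : I.OrdConnected)
    (f f' f'' g : ℝ → ℝ) (δ : ℝ) (hδ : 0 < δ)
    (hder : ∀ x ∈ I, HasDerivAt f (f' x) x)
    (hder2 : ∀ x ∈ I, HasDerivAt f' (f'' x) x)
    (hcont : ContinuousOn f'' I)
    (hconv : ConvexOn ℝ I f)
    (hmono : StrictMonoOn f I)
    (hbound : ∀ x ∈ I, δ ≤ f'' x)
    (hinv : ∀ x ∈ I, g (f x) = x) :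
    ∀ x₁ ∈ I, ∀ x₂ ∈ I,
      |g (f x₂) - g (f x₁)| ≤ Real.sqrt (2 / δ) * |f x₂ - f x₁| ^ ((1 : ℝ) / 2) :=
  stmt_0_general I hI f f' f'' g δ hδ hder hder2 hmono hbound hinv
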